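/- Let Ω ⊂ ℝ^n be a bounded convex polygon (n=2) with a vertex x⁰ at the origin with interior angle ω and set σ = π/ω > 1. Suppose G satisfies in a neighborhood V of x⁰: |D_x^α D_y^β G(x,y)| ≤ C ρ(x)^{σ−|α|−ε} ρ(y)^{−σ−|β|+ε} when ρ(x) < ρ(y)/2, where ρ(x) = |x − x⁰|, and |∂_{x_i}∂_{y_j}G(x,y)| ≤ C|x−y|^{−2} everywhere. Fix ε with σ − 1 − ε > 0 and 0 < γ < σ − 1 − ε. Then for x, x̄, y ∈ V with |x−y| > M|x−x̄| > ρ(x), M > 5, and ρ(x) < ρ(y)/4: |∂_{x_i}∂_{y_j}G(x,y) − ∂_{x_i}∂_{y_j}G(x̄,y)| ≤ C' |x−x̄|^γ |x−y|^{−2−γ}. -/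
import Mathlib

open MeasureTheory ENNReal Metric
open scoped ENNReal RealInnerProductSpace
noncomputable section

abbrev Euc (n : ℕ) : Type := EuclideanSpace ℝ (Fin n)

/-- A cube in `ℝⁿ` (axis-parallel, closed). -/
def IsCube {n : ℕ} (Q : Set (Euc n)) : Prop :=
  ∃ (c : Euc n) (r : ℝ), 0 < r ∧ Q = {y : Euc n | ∀ i, |y i - c i| ≤ r}

/-- Hardy–Littlewood maximal operator over cubes. -/
def maximalFn {n : ℕ} (f : Euc n → ℝ) (x : Euc n) : ℝ≥0∞ :=
  ⨆ (Q : Set (Euc n)) (_ : IsCube Q) (_ : x ∈ Q),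
    (volume Q)⁻¹ * ∫⁻ y in Q, ‖f y‖₊

/-- The Muckenhoupt `A_p` constant, `1 < p < ∞`. -/
def ApConst {n : ℕ} (p : ℝ) (w : Euc n → ℝ) : ℝ≥0∞ :=
  ⨆ (Q : Set (Euc n)) (_ : IsCube Q),
    ((volume Q)⁻¹ * ∫⁻ y in Q, ENNReal.ofReal (w y)) *
      ((volume Q)⁻¹ * ∫⁻ y in Q, ENNReal.ofReal (w y ^ (-1 / (p - 1)))) ^ (p - 1)

/-- The Muckenhoupt `A_1` constant. -/
def A1Const {n : ℕ} (w : Euc n → ℝ) : ℝ≥0∞ :=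
  ⨆ x : Euc n, maximalFn w x / ENNReal.ofReal (w x)

def MemAp {n : ℕ} (p : ℝ) (w : Euc n → ℝ) : Prop := ApConst p w < ⊤

def MemA1 {n : ℕ} (w : Euc n → ℝ) : Prop := A1Const w < ⊤


lemma aux17 (s γ : ℝ) (hγ : 0 < γ) (hs : γ < s)
    (d dy dxy h A B : ℝ) (hd : 0 ≤ d) (hh : 0 ≤ h) (hdxy : 0 < dxy)
    (hA : 0 ≤ A) (hB : 0 ≤ B)
    (hdA : d ≤ A * h) (hdB : d ≤ B * dxy) (hdy : 4 / 5 * dxy ≤ dy) :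
    d ^ s * dy ^ (-s - 2) ≤
      (A ^ γ * B ^ (s - γ) * (4 / 5 : ℝ) ^ (-s - 2)) * h ^ γ * dxy ^ (-2 - γ) := by
  have hdy0 : (0:ℝ) < 4 / 5 * dxy := by positivity
  have h1 : d ^ s = d ^ γ * d ^ (s - γ) := by
    rw [← Real.rpow_add' hd (by intro hc; simp at hc; linarith)]
    ring_nf
  have h2 : d ^ γ ≤ (A * h) ^ γ := Real.rpow_le_rpow hd hdA hγ.le
  have h3 : d ^ (s - γ) ≤ (B * dxy) ^ (s - γ) := Real.rpow_le_rpow hd hdB (by linarith)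
  have h4 : dy ^ (-s - 2) ≤ (4 / 5 * dxy) ^ (-s - 2) :=
    Real.rpow_le_rpow_of_nonpos hdy0 hdy (by linarith)
  have key : d ^ s * dy ^ (-s - 2) ≤ (A * h) ^ γ * (B * dxy) ^ (s - γ) * (4 / 5 * dxy) ^ (-s - 2) := by
    rw [h1]
    have e1 : (0:ℝ) ≤ d ^ γ := Real.rpow_nonneg hd _
    have e2 : (0:ℝ) ≤ d ^ (s - γ) := Real.rpow_nonneg hd _
    have e3 : (0:ℝ) ≤ dy ^ (-s - 2) := Real.rpow_nonneg (by linarith) _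
    have e4 : (0:ℝ) ≤ (A * h) ^ γ := Real.rpow_nonneg (by positivity) _
    have e5 : (0:ℝ) ≤ (B * dxy) ^ (s - γ) := Real.rpow_nonneg (by positivity) _
    calc d ^ γ * d ^ (s - γ) * dy ^ (-s - 2)
        ≤ (A * h) ^ γ * (B * dxy) ^ (s - γ) * dy ^ (-s - 2) := by
          apply mul_le_mul_of_nonneg_right _ e3
          exact mul_le_mul h2 h3 e2 e4
      _ ≤ (A * h) ^ γ * (B * dxy) ^ (s - γ) * (4 / 5 * dxy) ^ (-s - 2) := by
          apply mul_le_mul_of_nonneg_left h4 (by positivity)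
  calc d ^ s * dy ^ (-s - 2) ≤ (A * h) ^ γ * (B * dxy) ^ (s - γ) * (4 / 5 * dxy) ^ (-s - 2) := key
    _ = (A ^ γ * B ^ (s - γ) * (4 / 5 : ℝ) ^ (-s - 2)) * h ^ γ * dxy ^ (-2 - γ) := by
        rw [Real.mul_rpow hA hh, Real.mul_rpow hB hdxy.le,
          Real.mul_rpow (by norm_num) hdxy.le,
          show (-2 - γ : ℝ) = (s - γ) + (-s - 2) by ring,
          Real.rpow_add hdxy]
        ring

/-- Hölder estimate for the mixed second derivative of the Green
function near a convex corner, first subcase of Case 2. -/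
theorem stmt17 (ω : ℝ) (hω : 0 < ω) (σ : ℝ) (hσ : σ = Real.pi / ω) (hσ1 : 1 < σ)
    (V : Set (Euc 2)) (hV : V ∈ nhds (0 : Euc 2))
    (K : Euc 2 → Euc 2 → ℝ) (C ε γ : ℝ) (hC : 0 < C)
    (hε : 0 < ε) (hεσ : 0 < σ - 1 - ε) (hγ0 : 0 < γ) (hγ : γ < σ - 1 - ε)
    (hK1 : ∀ x ∈ V, ∀ y ∈ V, dist x 0 < dist y 0 / 2 →
      |K x y| ≤ C * dist x 0 ^ (σ - 1 - ε) * dist y 0 ^ (-σ - 1 + ε))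
    (hK2 : ∀ x y : Euc 2, x ≠ y → |K x y| ≤ C * dist x y ^ (-2 : ℝ))
    (M : ℝ) (hM : 5 < M) :
    ∃ C' : ℝ, 0 < C' ∧ ∀ x ∈ V, ∀ xb ∈ V, ∀ y ∈ V,
      M * dist x xb < dist x y → dist x 0 < M * dist x xb →
      dist x 0 < dist y 0 / 4 →
        |K x y - K xb y| ≤ C' * dist x xb ^ γ * dist x y ^ (-2 - γ) := by
  set s := σ - 1 - ε with hsdef
  refine ⟨C * ((M ^ γ * (1/3 : ℝ) ^ (s - γ) + (M + 1) ^ γ * (2/3 : ℝ) ^ (s - γ))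
      * (4/5 : ℝ) ^ (-s - 2)), by positivity, ?_⟩
  intro x hx xb hxb y hy hMd hxM hx4
  have hh0 : 0 < dist x xb := by nlinarith [dist_nonneg (x := x) (y := (0:Euc 2))]
  have hdxy0 : 0 < dist x y := by nlinarith
  have tri1 : dist x y ≤ dist x 0 + dist y 0 := by
    have := dist_triangle x (0 : Euc 2) y
    rwa [dist_comm (0:Euc 2) y] at this
  have tri2 : dist y 0 ≤ dist x 0 + dist x y := by
    have := dist_triangle y x (0 : Euc 2)
    rw [dist_comm y x] at this; linarith
  have tri3 : dist xb 0 ≤ dist x xb + dist x 0 := by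
    have := dist_triangle xb x (0 : Euc 2)
    rw [dist_comm xb x] at this; linarith
  have hdy0 : 0 < dist y 0 := by nlinarith [dist_nonneg (x := x) (y := (0:Euc 2))]
  -- dxy < (5/4) dy
  have h54 : dist x y < 5/4 * dist y 0 := by linarith
  -- h < dy/4
  have hhy : dist x xb < dist y 0 / 4 := by nlinarith
  -- xb close to corner
  have hxb4 : dist xb 0 < dist y 0 / 2 := by linarith
  have hx2 : dist x 0 < dist y 0 / 2 := by linarith
  -- dy < (4/3) dxy
  have h43 : 3/4 * dist y 0 < dist x y := by linarith
  have h45 : 4/5 * dist x y ≤ dist y 0 := by linarith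
  have hd13 : dist x 0 ≤ (1/3 : ℝ) * dist x y := by linarith
  have hdb23 : dist xb 0 ≤ (2/3 : ℝ) * dist x y := by linarith
  have hexp : -σ - 1 + ε = -s - 2 := by rw [hsdef]; ring
  have B1 := hK1 x hx y hy hx2
  have B2 := hK1 xb hxb y hy hxb4
  rw [hexp] at B1 B2
  have A1 := aux17 s γ hγ0 hγ (dist x 0) (dist y 0) (dist x y) (dist x xb) M (1/3)
    dist_nonneg dist_nonneg hdxy0 (by linarith) (by norm_num) hxM.le hd13 h45
  have A2 := aux17 s γ hγ0 hγ (dist xb 0) (dist y 0) (dist x y) (dist x xb) (M+1) (2/3)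
    dist_nonneg dist_nonneg hdxy0 (by linarith) (by norm_num)
    (by nlinarith) hdb23 h45
  calc |K x y - K xb y| ≤ |K x y| + |K xb y| := abs_sub _ _
    _ ≤ C * dist x 0 ^ s * dist y 0 ^ (-s - 2)
        + C * dist xb 0 ^ s * dist y 0 ^ (-s - 2) := add_le_add B1 B2
    _ = C * (dist x 0 ^ s * dist y 0 ^ (-s - 2))
        + C * (dist xb 0 ^ s * dist y 0 ^ (-s - 2)) := by ring
    _ ≤ C * ((M ^ γ * (1/3 : ℝ) ^ (s - γ) * (4/5 : ℝ) ^ (-s - 2)) * dist x xb ^ γ * dist x y ^ (-2 - γ))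
        + C * (((M+1) ^ γ * (2/3 : ℝ) ^ (s - γ) * (4/5 : ℝ) ^ (-s - 2)) * dist x xb ^ γ * dist x y ^ (-2 - γ)) := by
          exact add_le_add (mul_le_mul_of_nonneg_left A1 hC.le) (mul_le_mul_of_nonneg_left A2 hC.le)
    _ = C * ((M ^ γ * (1/3 : ℝ) ^ (s - γ) + (M + 1) ^ γ * (2/3 : ℝ) ^ (s - γ))
        * (4/5 : ℝ) ^ (-s - 2)) * dist x xb ^ γ * dist x y ^ (-2 - γ) := by ring
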